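/- For every integer N ≥ 2, the function x ↦ sin(x/2)/(N·sin(x/(2N))) is strictly decreasing on the interval (0, 2π]; it is strictly positive on (0, 2π), strictly less than 1 there, and equals 0 at x = 2π. (This is the strict monotonicity of the absolute Dirichlet kernel on its main lobe.) -/

import Mathlib

/-!
With `x = 2 N t` the kernel becomes `sin (N t) / (N sin t)` on `t ∈ (0, π / N]`. The derivative of
`sin (N t) / sin t` has the sign of `N cos (N t) sin t - sin (N t) cos t`, which is negative for
`N ≥ 2` by induction on `N` using the addition formulas; a similar induction gives
`sin (N t) < N sin t`, i.e. `D_N < 1`.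
-/

open Real

/-- Dirichlet kernel `D_N(x) = sin(x/2) / (N · sin(x/(2N)))`. -/
noncomputable def dirichlet (N : ℕ) (x : ℝ) : ℝ :=
  Real.sin (x / 2) / ((N : ℝ) * Real.sin (x / (2 * N)))

open Set

namespace Real

variable {n : ℕ} {t : ℝ}

lemma nat_mul_cos_nat_mul_mul_sin_lt (hn : 2 ≤ n) (ht : 0 < t) (hnt : n * t < π) :
    n * cos (n * t) * sin t < sin (n * t) * cos t := by
  induction n, hn using Nat.le_induction with
  | base =>
    push_cast at hnt ⊢
    have hs : 0 < sin t := sin_pos_of_pos_of_lt_pi ht (by linarith)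
    rw [sin_two_mul, cos_two_mul]
    nlinarith [sin_sq_add_cos_sq t, pow_pos hs 3]
  | succ n hn ih =>
    have hn2 : (2 : ℝ) ≤ n := by exact_mod_cast hn
    push_cast [add_one_mul] at hnt ⊢
    have hnt' : n * t < π := by linarith
    have hs : 0 < sin t := sin_pos_of_pos_of_lt_pi ht (by nlinarith)
    have hc : 0 < cos t := cos_pos_of_mem_Ioo ⟨by linarith [pi_pos], by nlinarith⟩
    have hsn : 0 < sin (n * t) := sin_pos_of_pos_of_lt_pi (by positivity) hnt'
    -- the difference for `n + 1` is `cos t` times the one for `n`, plus `(n + 1) sin (n t) sin² t`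
    rw [sin_add, cos_add]
    nlinarith [mul_lt_mul_of_pos_right (ih hnt') hc, mul_pos hsn (mul_pos hs hs)]

lemma sin_nat_mul_lt_nat_mul_sin (hn : 2 ≤ n) (ht : 0 < t) (hnt : n * t < π) :
    sin (n * t) < n * sin t := by
  induction n, hn using Nat.le_induction with
  | base =>
    push_cast at hnt ⊢
    have hs : 0 < sin t := sin_pos_of_pos_of_lt_pi ht (by linarith)
    have hc : cos t < 1 := by
      nlinarith [sin_sq_add_cos_sq t, cos_le_one t]
    rw [sin_two_mul]
    nlinarith
  | succ n hn ih =>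
    have hn2 : (2 : ℝ) ≤ n := by exact_mod_cast hn
    push_cast [add_one_mul] at hnt ⊢
    have hnt' : n * t < π := by linarith
    have hs : 0 < sin t := sin_pos_of_pos_of_lt_pi ht (by nlinarith)
    have hsn : 0 < sin (n * t) := sin_pos_of_pos_of_lt_pi (by positivity) hnt'
    rw [sin_add]
    nlinarith [ih hnt', mul_le_of_le_one_right hsn.le (cos_le_one t),
      mul_le_of_le_one_left hs.le (cos_le_one (n * t))]

lemma sin_pos_of_mem_Ioc_pi_div (hn : 2 ≤ n) (ht : t ∈ Ioc 0 (π / n)) : 0 < sin t :=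
  sin_pos_of_pos_of_lt_pi ht.1 (ht.2.trans_lt (div_lt_self pi_pos (by exact_mod_cast hn)))

lemma strictAntiOn_sin_nat_mul_div_sin (hn : 2 ≤ n) :
    StrictAntiOn (fun t => sin (n * t) / sin t) (Ioc 0 (π / n)) := by
  have hn0 : (0 : ℝ) < n := by positivity
  have hsin : ∀ t ∈ Ioc 0 (π / n), sin t ≠ 0 := fun t ht =>
    (sin_pos_of_mem_Ioc_pi_div hn ht).ne'
  refine strictAntiOn_of_deriv_neg (convex_Ioc _ _) ?_ fun t ht => ?_
  · exact ContinuousOn.div (by fun_prop) (by fun_prop) hsin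
  rw [interior_Ioc] at ht
  have hnt : n * t < π := by rw [← lt_div_iff₀' hn0]; exact ht.2
  have hderiv : HasDerivAt (fun t => sin (n * t) / sin t)
      ((n * cos (n * t) * sin t - sin (n * t) * cos t) / sin t ^ 2) t := by
    refine (((hasDerivAt_id t).const_mul (n : ℝ)).sin.div (hasDerivAt_sin t)
      (hsin t (Ioo_subset_Ioc_self ht))).congr_deriv ?_
    simp only [id, mul_one]
    ring
  rw [hderiv.deriv]
  exact div_neg_of_neg_of_pos (sub_neg.2 (nat_mul_cos_nat_mul_mul_sin_lt hn ht.1 hnt))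
    (pow_pos (sin_pos_of_mem_Ioc_pi_div hn (Ioo_subset_Ioc_self ht)) 2)

end Real

lemma div_two_mul_mem_Ioc_pi_div {N : ℕ} (hN : 0 < N) {x : ℝ} (hx : x ∈ Ioc 0 (2 * π)) :
    x / (2 * N) ∈ Ioc 0 (π / N) := by
  refine ⟨by have := hx.1; positivity, ?_⟩
  calc x / (2 * N) ≤ 2 * π / (2 * N) := by gcongr; exact hx.2
    _ = π / N := by field_simp

/-- for every `N ≥ 2`, `x ↦ sin(x/2)/(N·sin(x/(2N)))` is strictly decreasing
on `(0, 2π]`; it is strictly positive and strictly less than `1` on `(0, 2π)`, and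
vanishes at `x = 2π`. -/
theorem dirichlet_main_lobe (N : ℕ) (hN : 2 ≤ N) :
    StrictAntiOn (dirichlet N) (Set.Ioc 0 (2 * π)) ∧
    (∀ x ∈ Set.Ioo (0 : ℝ) (2 * π), 0 < dirichlet N x) ∧
    (∀ x ∈ Set.Ioo (0 : ℝ) (2 * π), dirichlet N x < 1) ∧
    dirichlet N (2 * π) = 0 := by
  have hN0 : (0 : ℝ) < N := by positivity
  have hhalf (x : ℝ) : N * (x / (2 * N)) = x / 2 := by field_simp
  have hpt {x : ℝ} (hx : x ∈ Ioc 0 (2 * π)) : x / (2 * N) ∈ Ioc 0 (π / N) :=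
    div_two_mul_mem_Ioc_pi_div (by omega) hx
  have hden {x : ℝ} (hx : x ∈ Ioc 0 (2 * π)) : 0 < N * sin (x / (2 * N)) :=
    mul_pos hN0 (sin_pos_of_mem_Ioc_pi_div hN (hpt hx))
  refine ⟨fun x hx y hy hxy => ?_, fun x hx => ?_, fun x hx => ?_, ?_⟩
  · have h := strictAntiOn_sin_nat_mul_div_sin hN (hpt hx) (hpt hy)
      (div_lt_div_of_pos_right hxy (by positivity))
    simp only [hhalf] at h
    have hdiv (z : ℝ) : dirichlet N z = sin (z / 2) / sin (z / (2 * N)) / N :=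
      div_mul_eq_div_div_swap _ _ _
    rw [hdiv, hdiv]
    exact div_lt_div_of_pos_right h hN0
  · exact div_pos (sin_pos_of_pos_of_lt_pi (by linarith [hx.1]) (by linarith [hx.2]))
      (hden (Ioo_subset_Ioc_self hx))
  · rw [dirichlet, div_lt_one (hden (Ioo_subset_Ioc_self hx)), ← hhalf]
    exact sin_nat_mul_lt_nat_mul_sin hN (hpt (Ioo_subset_Ioc_self hx)).1
      (by rw [hhalf]; linarith [hx.2])
  · simp [dirichlet]
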